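/- arXiv:0909.5594 — 3 statements merged into one kernel-verified Lean document; each statement's English description precedes it below -/
import Mathlib

section
/- For two distinct finite subsets I, J of the positive natural numbers, we have I < J in the Gabriel-Roiter order (i.e., the smallest element of the symmetric difference (I \ J) ∪ (J \ I) belongs to J) if and only if ∑_{i ∈ I} (1/2)^i < ∑_{j ∈ J} (1/2)^j as rational numbers. -/
/-!
Split `I` and `J` along `I ∩ J`: the measures differ by `μ(I \ J)` versus `μ(J \ I)`. If the least
element `m` of the symmetric difference lies in `J`, then `μ(J \ I) ≥ (1/2)^m`, while `I \ J` only
contains indices `> m`, so the geometric tail bound gives `μ(I \ J) < (1/2)^m`. Since two distinct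
sets are always comparable, this one implication yields the equivalence.
-/

/-- The Gabriel-Roiter order: `I < J` iff the smallest element of the
symmetric difference `(I \ J) ∪ (J \ I)` belongs to `J`. -/
def grLT (I J : Finset ℕ) : Prop :=
  ∃ m ∈ (I \ J) ∪ (J \ I), m ∈ J ∧ ∀ k ∈ (I \ J) ∪ (J \ I), m ≤ k

/-- `I ≪ J`: `I ⊆ J` and every element of `I` is strictly smaller than
every element of `J \ I`. -/
def grLL (I J : Finset ℕ) : Prop :=
  I ⊆ J ∧ ∀ a ∈ I, ∀ b ∈ J \ I, a < b

/-- `J` starts with `I`. -/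
def startsWith (I J : Finset ℕ) : Prop := I = J ∨ grLL I J

/-- The Gabriel-Roiter measure as a rational number. -/
def grMu (I : Finset ℕ) : ℚ := ∑ i ∈ I, (1/2 : ℚ) ^ i

open Finset

theorem sum_half_pow_lt_half_pow_of_forall_lt {K : Type*} [Field K] [LinearOrder K]
    [IsStrictOrderedRing K] {T : Finset ℕ} {m : ℕ} (hT : ∀ i ∈ T, m < i) :
    ∑ i ∈ T, (1 / 2 : K) ^ i < (1 / 2 : K) ^ m := by
  set n := T.sup id + m + 1
  have hsub : T ⊆ Ico (m + 1) n := fun i hi =>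
    mem_Ico.2 ⟨hT i hi, by have := le_sup (f := id) hi; simp only [id] at this; omega⟩
  -- The extra term `(1/2)^n` makes the bound `∑ Ico ≤ (1/2)^m` strict.
  have hn : n ∉ Ico (m + 1) n := by simp
  calc ∑ i ∈ T, (1 / 2 : K) ^ i
      ≤ ∑ i ∈ Ico (m + 1) n, (1 / 2 : K) ^ i :=
        sum_le_sum_of_subset_of_nonneg hsub fun _ _ _ => by positivity
    _ < ∑ i ∈ insert n (Ico (m + 1) n), (1 / 2 : K) ^ i := by
        rw [sum_insert hn]; exact lt_add_of_pos_left _ (by positivity)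
    _ ≤ ∑ i ∈ Ico (m + 1) (n + 1), (1 / 2 : K) ^ i :=
        sum_le_sum_of_subset_of_nonneg (by intro i; simp only [mem_insert, mem_Ico]; omega) fun _ _ _ => by positivity
    _ ≤ (1 / 2 : K) ^ (m + 1) / (1 - 1 / 2) :=
        geom_sum_Ico_le_of_lt_one (by norm_num) (by norm_num)
    _ = (1 / 2 : K) ^ m := by ring

theorem grMu_lt_grMu_of_grLT {I J : Finset ℕ} (h : grLT I J) : grMu I < grMu J := by
  obtain ⟨m, hmS, hmJ, hmin⟩ := h
  have hmJI : m ∈ J \ I := (mem_union.1 hmS).resolve_left fun h => (mem_sdiff.1 h).2 hmJ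
  have hmI : m ∉ I := (mem_sdiff.1 hmJI).2
  have hIJ : ∀ k ∈ I \ J, m < k := fun k hk =>
    (hmin k (mem_union_left _ hk)).lt_of_ne fun hmk => hmI (hmk ▸ (mem_sdiff.1 hk).1)
  have hlt : grMu (I \ J) < (1 / 2 : ℚ) ^ m := sum_half_pow_lt_half_pow_of_forall_lt hIJ
  have hge : (1 / 2 : ℚ) ^ m ≤ grMu (J \ I) :=
    single_le_sum (f := fun i => (1 / 2 : ℚ) ^ i) (fun _ _ => by positivity) hmJI
  have hI : grMu (I ∩ J) + grMu (I \ J) = grMu I := sum_inter_add_sum_sdiff I J _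
  have hJ : grMu (I ∩ J) + grMu (J \ I) = grMu J := by
    rw [inter_comm]; exact sum_inter_add_sum_sdiff J I _
  linarith

theorem grLT_or_grLT_of_ne {I J : Finset ℕ} (hne : I ≠ J) : grLT I J ∨ grLT J I := by
  have hS : ((I \ J) ∪ (J \ I)).Nonempty := by
    rw [nonempty_iff_ne_empty, ne_eq, union_eq_empty, sdiff_eq_empty_iff_subset,
      sdiff_eq_empty_iff_subset]
    exact fun h => hne (h.1.antisymm h.2)
  set m := ((I \ J) ∪ (J \ I)).min' hS
  have hmin : ∀ k ∈ (I \ J) ∪ (J \ I), m ≤ k := fun k hk => min'_le _ k hk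
  rcases mem_union.1 (min'_mem _ hS) with hmI | hmJ
  · exact Or.inr ⟨m, by rw [union_comm]; exact min'_mem _ hS, (mem_sdiff.1 hmI).1,
      fun k hk => hmin k (by rwa [union_comm])⟩
  · exact Or.inl ⟨m, min'_mem _ hS, (mem_sdiff.1 hmJ).1, hmin⟩

theorem stmt_0_general (I J : Finset ℕ) : grLT I J ↔ grMu I < grMu J := by
  refine ⟨grMu_lt_grMu_of_grLT, fun hlt => ?_⟩
  have hne : I ≠ J := fun h => hlt.ne (congrArg grMu h)
  exact (grLT_or_grLT_of_ne hne).resolve_right fun hJI => (grMu_lt_grMu_of_grLT hJI).not_gt hlt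

theorem stmt_0 (I J : Finset ℕ) (hI : ∀ i ∈ I, 0 < i) (hJ : ∀ j ∈ J, 0 < j)
    (hne : I ≠ J) : grLT I J ↔ grMu I < grMu J :=
  stmt_0_general I J
end

section
/- Let I, J, K be finite subsets of the positive natural numbers such that I ≪ J with I ≠ J, and such that I < K < J in the Gabriel-Roiter order. Then K starts with I, i.e., I ≪ K. -/
/-!
Let `m` be the smallest element where `I` and `K` differ; `I < K` puts it in `K \ I`. Every
element of `I` lies below `m`: if `m ∈ J` this is `I ≪ J`, and otherwise the smallest element `n`
where `K` and `J` differ lies in `J \ K`, below `m`, hence in `J \ I`, and `I ≪ J` bounds `I`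
by `n`. Since `I` and `K` agree below `m`, this makes `I` an initial segment of `K`.
-/

lemma grLT.exists_agree_below {I K : Finset ℕ} (h : grLT I K) :
    ∃ m ∈ K, m ∉ I ∧ ∀ x < m, (x ∈ I ↔ x ∈ K) := by
  obtain ⟨m, hm, hmK, hmin⟩ := h
  have hmI : m ∉ I := by simp_all
  refine ⟨m, hmK, hmI, fun x hx => ?_⟩
  by_contra hne
  have : x ∈ (I \ K) ∪ (K \ I) := by
    simp only [Finset.mem_union, Finset.mem_sdiff]
    tauto
  exact absurd (hmin x this) (not_le.mpr hx)

lemma grLL_of_agree_below {I K : Finset ℕ} {m : ℕ} (hlt : ∀ a ∈ I, a < m)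
    (hagree : ∀ x < m, (x ∈ I ↔ x ∈ K)) : grLL I K := by
  refine ⟨fun a ha => (hagree a (hlt a ha)).mp ha, fun a ha b hb => ?_⟩
  obtain ⟨hbK, hbI⟩ := Finset.mem_sdiff.mp hb
  have hmb : m ≤ b := not_lt.mp fun hbm => hbI ((hagree b hbm).mpr hbK)
  exact (hlt a ha).trans_le hmb

lemma lt_of_grLL_of_grLT {I J K : Finset ℕ} {m : ℕ} (hIJ : grLL I J) (hKJ : grLT K J)
    (hmK : m ∈ K) (hmI : m ∉ I) (hagree : ∀ x < m, (x ∈ I ↔ x ∈ K)) :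
    ∀ a ∈ I, a < m := by
  intro a ha
  by_cases hmJ : m ∈ J
  · exact hIJ.2 a ha m (Finset.mem_sdiff.mpr ⟨hmJ, hmI⟩)
  obtain ⟨n, hnJ, hnK, hKJagree⟩ := hKJ.exists_agree_below
  have hnm : n < m := by
    refine lt_of_le_of_ne (not_lt.mp fun hmn => hmJ ((hKJagree m hmn).mp hmK)) ?_
    rintro rfl
    exact hnK hmK
  have hnI : n ∉ I := fun hnI => hnK ((hagree n hnm).mp hnI)
  exact (hIJ.2 a ha n (Finset.mem_sdiff.mpr ⟨hnJ, hnI⟩)).trans hnm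

theorem stmt_6_general (I J K : Finset ℕ) (hIJ : grLL I J)
    (h1 : grLT I K) (h2 : grLT K J) : grLL I K := by
  obtain ⟨m, hmK, hmI, hagree⟩ := h1.exists_agree_below
  exact grLL_of_agree_below (lt_of_grLL_of_grLT hIJ h2 hmK hmI hagree) hagree

theorem stmt_6 (I J K : Finset ℕ) (hI : ∀ i ∈ I, 0 < i) (hJ : ∀ j ∈ J, 0 < j)
    (hK : ∀ k ∈ K, 0 < k) (hIJ : grLL I J) (hne : I ≠ J)
    (h1 : grLT I K) (h2 : grLT K J) : grLL I K :=
  stmt_6_general I J K hIJ h1 h2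
end

section
/- Let I ≪ I' be finite subsets of the positive natural numbers with I ≠ I'. Let b be a positive natural number with b strictly larger than every element of I and strictly smaller than every element of I' \ I, and let a be a positive natural number strictly larger than every element of I'. Then I' ∪ {a} < I ∪ {b} in the Gabriel-Roiter order. -/
/- The Gabriel-Roiter order is lexicographic: `I < J` as soon as the two sets agree below some
`m ∈ J \ I`. Here they agree below `b`, since `I` and `I'` agree below `b` and `b < a`. -/

theorem grLT_of_agree_below {I J : Finset ℕ} {m : ℕ} (hmJ : m ∈ J) (hmI : m ∉ I)
    (hagree : ∀ k < m, k ∈ I ↔ k ∈ J) : grLT I J := by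
  refine ⟨m, Finset.mem_union_right _ (Finset.mem_sdiff.2 ⟨hmJ, hmI⟩), hmJ, fun k hk => ?_⟩
  by_contra! hkm
  have := hagree k hkm
  simp only [Finset.mem_union, Finset.mem_sdiff] at hk
  tauto

theorem stmt_9_general (I I' : Finset ℕ) (a b : ℕ)
    (hII' : grLL I I') (hne : I ≠ I')
    (hbI : ∀ i ∈ I, i < b) (hbI' : ∀ k ∈ I' \ I, b < k)
    (haI' : ∀ i ∈ I', i < a) :
    grLT (I' ∪ {a}) (I ∪ {b}) := by
  obtain ⟨k, hkI', hkI⟩ := Finset.exists_of_ssubset (hII'.1.ssubset_of_ne hne)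
  have hba : b < a := (hbI' k (Finset.mem_sdiff.2 ⟨hkI', hkI⟩)).trans (haI' k hkI')
  have hb_notMem : b ∉ I' := fun hb =>
    lt_irrefl b (if hbI_mem : b ∈ I then hbI b hbI_mem else hbI' b (Finset.mem_sdiff.2 ⟨hb, hbI_mem⟩))
  have hagree : ∀ i < b, i ∈ I ↔ i ∈ I' := fun i hi =>
    ⟨fun h => hII'.1 h, fun h => by_contra fun hiI => (hbI' i (Finset.mem_sdiff.2 ⟨h, hiI⟩)).not_gt hi⟩
  refine grLT_of_agree_below (m := b) (by simp) (by simp [hb_notMem, hba.ne]) fun i hi => ?_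
  simp [hi.ne, (hi.trans hba).ne, hagree i hi]

theorem stmt_9 (I I' : Finset ℕ) (a b : ℕ) (hI : ∀ i ∈ I, 0 < i)
    (hI' : ∀ i ∈ I', 0 < i) (ha : 0 < a) (hb : 0 < b)
    (hII' : grLL I I') (hne : I ≠ I')
    (hbI : ∀ i ∈ I, i < b) (hbI' : ∀ k ∈ I' \ I, b < k)
    (haI' : ∀ i ∈ I', i < a) :
    grLT (I' ∪ {a}) (I ∪ {b}) :=
  stmt_9_general I I' a b hII' hne hbI hbI' haI'
end
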